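/- arXiv:2506.09598 — 2 statements merged into one kernel-verified Lean document; each statement's English description precedes it below -/
import Mathlib

section
/- For a codimension-3 decoration (λ, μ) with k = ∑μⱼ and λ₁ + λ₂ = k+1, define p₀(λ, μ) = (rsort(λ₁, λ₂, μ₁, …, μ_t), (λ₃, …, λ_b)). Then μ₁ ≤ λ₂, and p₀(p₀(λ, μ)) = (λ, μ). -/
/-- Sort a list of integers in non-increasing order. -/
def rsort (l : List ℤ) : List ℤ := List.insertionSort (· ≥ ·) l

/-- Remove all non-positive parts (trailing zeros) from a partition. -/
def strip (l : List ℤ) : List ℤ := l.filter (fun x => 0 < x)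

/-- The smallest minimal link of a codimension-`c` pair of partitions `(λ, μ)`:
choose the `c` largest parts of `λ` (padding with zeros if needed), shift them by
`p = (c-2)k + 1 - (λ₁ + ⋯ + λ_c)` where `k = ∑ μⱼ`, merge with `μ` and re-sort;
the other partition becomes `(λ_{c+1}, …, λ_b)`. -/
def smlink (c : ℕ) (P : List ℤ × List ℤ) : List ℤ × List ℤ :=
  let p : ℤ := ((c : ℤ) - 2) * P.2.sum + 1 - (P.1.take c).sum
  (strip (rsort ((P.1.take c ++ List.replicate (c - P.1.length) 0).map (· + p) ++ P.2)),
   strip (P.1.drop c))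

/-- The smallest minimal link of `P` produces nonnegative parts, i.e. `λ_c + p ≥ 0`. -/
def ValidLink (c : ℕ) (P : List ℤ × List ℤ) : Prop :=
  0 ≤ P.1.getD (c - 1) 0 + (((c : ℤ) - 2) * P.2.sum + 1 - (P.1.take c).sum)

/-- A partition: a non-increasing list of positive integers. -/
def IsPartition (l : List ℤ) : Prop := l.Pairwise (· ≥ ·) ∧ ∀ x ∈ l, 0 < x

/-- A codimension-`c` decoration: a pair of partitions reachable to the complete
intersection pair `((1^c), (1))` by finitely many smallest minimal links, all of
whose intermediate links are valid (have nonnegative parts). -/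
def IsDecoration (c : ℕ) (P : List ℤ × List ℤ) : Prop :=
  IsPartition P.1 ∧ IsPartition P.2 ∧
  ∃ n : ℕ, (∀ m < n, ValidLink c ((smlink c)^[m] P)) ∧
    (smlink c)^[n] P = (List.replicate c 1, [1])

/-- The zero-shift link `p₀` of a codimension-3 pair `(λ, μ)` with `λ₁+λ₂ = k+1`:
`p₀(λ, μ) = (rsort(λ₁, λ₂, μ₁, …, μ_t), (λ₃, …, λ_b))`. -/
def p0 (P : List ℤ × List ℤ) : List ℤ × List ℤ :=
  (rsort (P.1.getD 0 0 :: P.1.getD 1 0 :: P.2), P.1.drop 2)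

/-!
Along the chain of links down to `((1,1,1),(1))` the identity `∑λ = 2∑μ + 1` propagates
backwards from the complete intersection, and `μ` stays nonempty. The link of `(λ, μ)` shifts
`λ₁, λ₂, λ₃` by `p = k + 1 - (λ₁ + λ₂ + λ₃)` and merges them with `μ`, so its two largest parts
add up to at least `λ₁ + p + μ₁`. Validity of the next link bounds them by the new level plus one,
`∑λ - (λ₁ + λ₂ + λ₃) + 1`; with `∑λ = 2k + 1` and `λ₁ + λ₂ = k + 1` this is `μ₁ ≤ λ₂`. Then
`λ₁ ≥ λ₂ ≥ μ₁ ≥ μ₂ ≥ ⋯` is already sorted, so `p₀` only exchanges `(λ₃, …)` with `μ` and is an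
involution at `(λ, μ)`.
-/

lemma rsort_perm (l : List ℤ) : (rsort l).Perm l := List.perm_insertionSort _ _

lemma pairwise_rsort (l : List ℤ) : (rsort l).Pairwise (· ≥ ·) := List.pairwise_insertionSort _ _

lemma rsort_eq_self {l : List ℤ} (h : l.Pairwise (· ≥ ·)) : rsort l = l :=
  List.Perm.eq_of_pairwise' (pairwise_rsort l) h (rsort_perm l)

lemma isPartition_strip {l : List ℤ} (h : l.Pairwise (· ≥ ·)) : IsPartition (strip l) :=
  ⟨h.filter _, fun x hx => by simpa using (List.mem_filter.1 hx).2⟩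

lemma sum_strip {l : List ℤ} (h : ∀ x ∈ l, 0 ≤ x) : (strip l).sum = l.sum := by
  induction l with
  | nil => rfl
  | cons x t ih =>
    have ht := ih fun y hy => h y (List.mem_cons_of_mem _ hy)
    rcases (h x List.mem_cons_self).lt_or_eq with hx | rfl
    · simp [strip, hx, ← ht]
    · simp [strip, ← ht]

lemma getD_strip {l : List ℤ} (hl : l.Pairwise (· ≥ ·)) (h0 : ∀ x ∈ l, 0 ≤ x) (i : ℕ) :
    (strip l).getD i 0 = l.getD i 0 := by
  induction l generalizing i with
  | nil => rfl
  | cons x t ih =>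
    rcases (h0 x List.mem_cons_self).lt_or_eq with hx | rfl
    · have hs : strip (x :: t) = x :: strip t := by simp [strip, hx]
      cases i with
      | zero => simp [hs]
      | succ i => simpa [hs] using ih hl.of_cons (fun y hy => h0 y (List.mem_cons_of_mem _ hy)) i
    · have hz : ∀ y ∈ 0 :: t, y = 0 := by
        intro y hy
        refine le_antisymm ?_ (h0 y hy)
        rcases List.mem_cons.1 hy with rfl | hy
        · rfl
        · exact List.rel_of_pairwise_cons hl hy
      have hs : strip (0 :: t) = [] := List.filter_eq_nil_iff.2 fun y hy => by simp [hz y hy]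
      rw [hs, List.getD_nil, List.getD_eq_getElem?_getD]
      cases hi : (0 :: t)[i]? with
      | none => rfl
      | some y => exact (hz y (List.mem_of_getElem? hi)).symm

lemma le_getD_zero {l : List ℤ} (hl : l.Pairwise (· ≥ ·)) {x : ℤ} (hx : x ∈ l) :
    x ≤ l.getD 0 0 := by
  cases l with
  | nil => simp at hx
  | cons a t =>
    rcases List.mem_cons.1 hx with rfl | hx
    · exact le_rfl
    · exact List.rel_of_pairwise_cons hl hx

lemma getD_le_getD {l : List ℤ} (hl : l.Pairwise (· ≥ ·)) (h0 : ∀ x ∈ l, 0 ≤ x) {i j : ℕ}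
    (hij : i ≤ j) : l.getD j 0 ≤ l.getD i 0 := by
  induction l generalizing i j with
  | nil => simp
  | cons a t ih =>
    have ht : ∀ x ∈ t, 0 ≤ x := fun x hx => h0 x (List.mem_cons_of_mem _ hx)
    cases j with
    | zero => obtain rfl := Nat.le_zero.1 hij; rfl
    | succ j =>
      cases i with
      | zero =>
        rw [List.getD_cons_succ, List.getD_cons_zero, List.getD_eq_getElem?_getD]
        cases hj : t[j]? with
        | none => exact h0 a List.mem_cons_self
        | some y => exact List.rel_of_pairwise_cons hl (List.mem_of_getElem? hj)
      | succ i => exact ih hl.of_cons ht (Nat.succ_le_succ_iff.1 hij)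

lemma take_three_append_replicate (l : List ℤ) :
    l.take 3 ++ List.replicate (3 - l.length) 0 = [l.getD 0 0, l.getD 1 0, l.getD 2 0] := by
  match l with
  | [] | [_] | [_, _] | _ :: _ :: _ :: _ => simp

lemma sum_take_three (l : List ℤ) : (l.take 3).sum = l.getD 0 0 + l.getD 1 0 + l.getD 2 0 := by
  simpa [add_assoc] using congrArg List.sum (take_three_append_replicate l)

def linkShift (P : List ℤ × List ℤ) : ℤ :=
  P.2.sum + 1 - (P.1.getD 0 0 + P.1.getD 1 0 + P.1.getD 2 0)

def linkParts (P : List ℤ × List ℤ) : List ℤ :=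
  (P.1.getD 0 0 + linkShift P) :: (P.1.getD 1 0 + linkShift P) :: (P.1.getD 2 0 + linkShift P) :: P.2

lemma smlink_three (P : List ℤ × List ℤ) :
    smlink 3 P = (strip (rsort (linkParts P)), strip (P.1.drop 3)) := by
  simp [smlink, linkParts, linkShift, take_three_append_replicate, sum_take_three]

lemma validLink_three_iff (P : List ℤ × List ℤ) :
    ValidLink 3 P ↔ P.1.getD 0 0 + P.1.getD 1 0 ≤ P.2.sum + 1 := by
  simp only [ValidLink, sum_take_three, Nat.cast_ofNat]
  constructor <;> intro h <;> linarith

lemma nonneg_of_mem_linkParts {P : List ℤ × List ℤ} (h1 : IsPartition P.1)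
    (h2 : ∀ x ∈ P.2, 0 < x) (hv : ValidLink 3 P) : ∀ x ∈ linkParts P, 0 ≤ x := by
  have h0 : ∀ x ∈ P.1, 0 ≤ x := fun x hx => (h1.2 x hx).le
  have h20 := getD_le_getD h1.1 h0 (show 0 ≤ 2 by norm_num)
  have h21 := getD_le_getD h1.1 h0 (show 1 ≤ 2 by norm_num)
  have hp : 0 ≤ P.1.getD 2 0 + linkShift P := by
    rw [validLink_three_iff] at hv
    simp only [linkShift]
    linarith
  intro x hx
  simp only [linkParts, List.mem_cons] at hx
  rcases hx with rfl | rfl | rfl | hx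
  · linarith
  · linarith
  · exact hp
  · exact (h2 x hx).le

lemma sum_fst_smlink_three {P : List ℤ × List ℤ} (h1 : IsPartition P.1)
    (h2 : ∀ x ∈ P.2, 0 < x) (hv : ValidLink 3 P) :
    (smlink 3 P).1.sum = 4 * P.2.sum + 3 - 2 * (P.1.getD 0 0 + P.1.getD 1 0 + P.1.getD 2 0) := by
  have h0 : ∀ x ∈ rsort (linkParts P), 0 ≤ x := fun x hx =>
    nonneg_of_mem_linkParts h1 h2 hv x ((rsort_perm _).mem_iff.1 hx)
  rw [smlink_three, sum_strip h0, (rsort_perm _).sum_eq]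
  simp only [linkParts, linkShift, List.sum_cons]
  ring

lemma sum_snd_smlink_three {P : List ℤ × List ℤ} (h1 : ∀ x ∈ P.1, 0 < x) :
    (smlink 3 P).2.sum = P.1.sum - (P.1.getD 0 0 + P.1.getD 1 0 + P.1.getD 2 0) := by
  have h0 : ∀ x ∈ P.1.drop 3, 0 ≤ x := fun x hx => (h1 x (List.mem_of_mem_drop hx)).le
  rw [smlink_three, sum_strip h0, ← sum_take_three, ← List.sum_take_add_sum_drop P.1 3]
  ring

lemma isPartition_smlink (c : ℕ) {P : List ℤ × List ℤ} (h : IsPartition P.1) :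
    IsPartition (smlink c P).1 ∧ IsPartition (smlink c P).2 :=
  ⟨isPartition_strip (pairwise_rsort _), isPartition_strip (h.1.sublist (List.drop_sublist _ _))⟩

theorem IsDecoration.induction {c : ℕ} {Q : List ℤ × List ℤ → Prop}
    (base : Q (List.replicate c 1, [1]))
    (step : ∀ P, IsDecoration c P → ValidLink c P → Q (smlink c P) → Q P)
    {P : List ℤ × List ℤ} (h : IsDecoration c P) : Q P := by
  obtain ⟨h1, h2, n, hval, hn⟩ := h
  induction n generalizing P with
  | zero =>
    rw [Function.iterate_zero_apply] at hn
    exact hn ▸ base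
  | succ n ih =>
    refine step P ⟨h1, h2, n + 1, hval, hn⟩ (hval 0 n.succ_pos) ?_
    obtain ⟨h1', h2'⟩ := isPartition_smlink c h1
    exact ih h1' h2' (fun m hm => hval (m + 1) (by omega)) hn

lemma smlink_three_replicate : smlink 3 (List.replicate 3 1, [1]) = ([1], []) := by decide

lemma smlink_three_one : smlink 3 ([1], []) = ([1], []) := by decide

/-- After reaching `((1,1,1),(1))` the links stay valid: they go to the fixed point `((1),())`. -/
theorem IsDecoration.validLink_iterate {P : List ℤ × List ℤ} (h : IsDecoration 3 P) (m : ℕ) :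
    ValidLink 3 ((smlink 3)^[m] P) := by
  obtain ⟨-, -, n, hval, hn⟩ := h
  rcases lt_or_ge m n with hm | hm
  · exact hval m hm
  obtain ⟨j, rfl⟩ := Nat.exists_eq_add_of_le hm
  rw [add_comm, Function.iterate_add_apply, hn]
  cases j with
  | zero => rw [Function.iterate_zero_apply, validLink_three_iff]; decide
  | succ j =>
    rw [Function.iterate_succ_apply, smlink_three_replicate,
      Function.iterate_fixed smlink_three_one, validLink_three_iff]
    decide

theorem IsDecoration.sum_fst {P : List ℤ × List ℤ} (h : IsDecoration 3 P) :
    P.1.sum = 2 * P.2.sum + 1 := by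
  refine IsDecoration.induction (Q := fun P => P.1.sum = 2 * P.2.sum + 1) (by decide)
    (fun P hP hv ih => ?_) h
  rw [sum_fst_smlink_three hP.1 hP.2.1.2 hv, sum_snd_smlink_three hP.1.2] at ih
  linarith

theorem IsDecoration.snd_ne_nil {P : List ℤ × List ℤ} (h : IsDecoration 3 P) : P.2 ≠ [] := by
  refine IsDecoration.induction (Q := fun P => P.2 ≠ []) (by decide)
    (fun P hP _ ih hnil => ih ?_) h
  have hsum : P.1.sum = 1 := by simpa [hnil] using hP.sum_fst
  have hlen : P.1.length • (1 : ℤ) ≤ P.1.sum := List.card_nsmul_le_sum _ _ fun x hx => hP.1.2 x hx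
  rw [smlink_three, List.drop_eq_nil_of_le (by rw [nsmul_eq_mul, mul_one] at hlen; omega)]
  rfl

lemma add_le_getD_zero_add_getD_one {l : List ℤ} (hl : l.Pairwise (· ≥ ·)) {x y : ℤ}
    (h : [x, y].Subperm l) : x + y ≤ l.getD 0 0 + l.getD 1 0 := by
  wlog hxy : y ≤ x generalizing x y
  · rw [add_comm]
    exact this ((List.Perm.swap x y []).subperm.trans h) (by linarith)
  have hs : [x, y].Sublist l := List.sublist_of_subperm_of_pairwise h (by simpa using hxy) hl
  cases l with
  | nil => simp at hs
  | cons a t =>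
    have hx : x ≤ a := le_getD_zero hl (hs.subset (by simp))
    have hy : y ≤ t.getD 0 0 := le_getD_zero hl.of_cons (hs.tail.subset (by simp))
    simp only [List.getD_cons_zero, List.getD_cons_succ]
    linarith

lemma getD_add_linkShift_add_le {P : List ℤ × List ℤ} (h1 : IsPartition P.1)
    (h2 : ∀ x ∈ P.2, 0 < x) (hv : ValidLink 3 P) {m : ℤ} (hm : m ∈ P.2) :
    P.1.getD 0 0 + linkShift P + m ≤ (smlink 3 P).1.getD 0 0 + (smlink 3 P).1.getD 1 0 := by
  have h0 : ∀ x ∈ rsort (linkParts P), 0 ≤ x := fun x hx =>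
    nonneg_of_mem_linkParts h1 h2 hv x ((rsort_perm _).mem_iff.1 hx)
  rw [smlink_three, getD_strip (pairwise_rsort _) h0, getD_strip (pairwise_rsort _) h0]
  refine add_le_getD_zero_add_getD_one (pairwise_rsort _) ?_
  refine List.Sublist.subperm ?_ |>.trans (rsort_perm _).symm.subperm
  exact List.cons_sublist_cons.2 (List.singleton_sublist.2 (by simp [hm]))

lemma p0_p0 {a b : ℤ} {r μ : List ℤ} (hl : (a :: b :: r).Pairwise (· ≥ ·))
    (hμ : (a :: b :: μ).Pairwise (· ≥ ·)) : p0 (p0 (a :: b :: r, μ)) = (a :: b :: r, μ) := by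
  simp [p0, rsort_eq_self hμ, rsort_eq_self hl]

/-- For a codimension-3 decoration `(λ, μ)` with `k = ∑μⱼ` and `λ₁ + λ₂ = k+1`,
one has `μ₁ ≤ λ₂`, and `p₀(p₀(λ, μ)) = (λ, μ)`. -/
theorem stmt10 (P : List ℤ × List ℤ) (k : ℤ) (hk : P.2.sum = k)
    (h : IsDecoration 3 P) (hll : P.1.getD 0 0 + P.1.getD 1 0 = k + 1) :
    P.2.getD 0 0 ≤ P.1.getD 1 0 ∧ p0 (p0 P) = P := by
  subst hk
  obtain ⟨l, μ⟩ := P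
  obtain ⟨m, μ, rfl⟩ := List.exists_cons_of_ne_nil h.snd_ne_nil
  have hbound := getD_add_linkShift_add_le h.1 h.2.1.2 (h.validLink_iterate 0) List.mem_cons_self
  have hnext := (validLink_three_iff _).1 (h.validLink_iterate 1)
  rw [Function.iterate_one, sum_snd_smlink_three h.1.2] at hnext
  have hm : m ≤ l.getD 1 0 := by
    have := h.sum_fst
    simp only [linkShift] at hbound
    linarith
  have hm0 : 0 < m := h.2.1.2 m List.mem_cons_self
  rcases l with _ | ⟨a, _ | ⟨b, r⟩⟩
  · simp only [List.getD_nil] at hm; linarith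
  · simp only [List.getD_cons_succ, List.getD_nil] at hm; linarith
  have hab : b ≤ a := List.rel_of_pairwise_cons h.1.1 List.mem_cons_self
  have hμ := List.isChain_iff_pairwise.2 h.2.1.1
  exact ⟨hm, p0_p0 h.1.1 (List.isChain_iff_pairwise.1 (.cons_cons hab (.cons_cons hm hμ)))⟩
end

section
/- Define for t ≥ 1 the pair H_t = ((2^{t-1}, 2^{t-1}, 2^{t-2}, 2^{t-2}, …, 2, 2, 1, 1, 1), (2^{t-1}, 2^{t-2}, …, 2, 1)). Then the level of H_t is κ(H_t) = 2^t - 1, and H_{t+1} = p₀(gen(H_t)), where gen is the generic link and p₀ is the zero-shift link; consequently every H_t is a codimension-3 decoration with λ₁ + λ₂ = κ(H_t) + 1. -/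
/-- The generic link of a codimension-3 pair `(λ, μ)` with `k = ∑μⱼ`:
`gen(λ, μ) = ((k+1, k+1, k+1, μ₁, …, μ_t), (λ₁, …, λ_b))`. -/
def genlink (P : List ℤ × List ℤ) : List ℤ × List ℤ :=
  (rsort ((P.2.sum + 1) :: (P.2.sum + 1) :: (P.2.sum + 1) :: P.2), P.1)


/-- First partition of `H_t`: `(2^{t-1}, 2^{t-1}, 2^{t-2}, 2^{t-2}, …, 2, 2, 1, 1, 1)`. -/
def Hlam (t : ℕ) : List ℤ :=
  (List.range (2 * (t - 1))).map (fun i => (2 : ℤ) ^ (t - 1 - i / 2)) ++ [1, 1, 1]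

/-- Second partition of `H_t`: `(2^{t-1}, 2^{t-2}, …, 2, 1)`. -/
def Hmu (t : ℕ) : List ℤ := (List.range t).map (fun i => (2 : ℤ) ^ (t - 1 - i))

/-- The pair of partitions `H_t`. -/
def Hpair (t : ℕ) : List ℤ × List ℤ := (Hlam t, Hmu t)

/-!
Both smallest minimal links that take `H_{t+1}` back to `H_t` are level links: the two largest
parts of `λ` add up to `k + 1`, so the shift is `-λ₃`, the third part becomes `0` and is dropped.
Concretely `H_{t+1} ↦ ((2^t, 2^{t-1}, 2^{t-1}, 2^{t-1}, …, 1), (2^{t-1}, 2^{t-2}, 2^{t-2}, …, 1, 1, 1))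
↦ H_t`, and `H_1 = ((1, 1, 1), (1))`, so every `H_t` is a decoration. Since `κ(H_t) + 1 = 2^t`,
`gen(H_t) = ((2^t, 2^t, μ(H_{t+1})), λ(H_t))`, from which `p₀` reads off `H_{t+1}`.
-/

lemma isPartition_cons_cons {a b : ℤ} {l : List ℤ} :
    IsPartition (a :: b :: l) ↔ b ≤ a ∧ IsPartition (b :: l) := by
  simp only [IsPartition, ← List.isChain_iff_pairwise, List.isChain_cons_cons, List.mem_cons]
  constructor
  · rintro ⟨⟨hba, hchain⟩, hpos⟩
    exact ⟨hba, hchain, fun x hx => hpos x (Or.inr hx)⟩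
  · rintro ⟨hba, hchain, hpos⟩
    refine ⟨⟨hba, hchain⟩, ?_⟩
    rintro x (rfl | hx)
    · exact (hpos b (Or.inl rfl)).trans_le hba
    · exact hpos x hx

lemma pairwise_ge_map_range {f : ℕ → ℤ} (hf : Antitone f) (n : ℕ) :
    ((List.range n).map f).Pairwise (· ≥ ·) :=
  List.pairwise_map.2 (List.pairwise_lt_range.imp fun h => hf h.le)

lemma rsort_eq_of_perm {l l' : List ℤ} (hp : l.Perm l') (h : l'.Pairwise (· ≥ ·)) :
    rsort l = l' :=
  ((List.perm_insertionSort _ l).trans hp).eq_of_pairwise' (List.pairwise_insertionSort _ l) h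

lemma strip_eq_self {l : List ℤ} (h : ∀ x ∈ l, 0 < x) : strip l = l :=
  List.filter_eq_self.2 fun x hx => decide_eq_true (h x hx)

lemma strip_cons_of_pos {a : ℤ} (l : List ℤ) (ha : 0 < a) : strip (a :: l) = a :: strip l :=
  List.filter_cons_of_pos (decide_eq_true ha)

lemma strip_cons_zero (l : List ℤ) : strip (0 :: l) = strip l :=
  List.filter_cons_of_neg (by simp)

lemma strip_rsort (l : List ℤ) : strip (rsort l) = rsort (strip l) :=
  (rsort_eq_of_perm ((List.perm_insertionSort _ l).symm.filter _)
    ((List.pairwise_insertionSort _ l).filter _)).symm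

lemma smlink_three_of_add_eq {a b c : ℤ} {L M : List ℤ} (hab : a + b = M.sum + 1)
    (hL : ∀ x ∈ L, 0 < x) :
    smlink 3 (a :: b :: c :: L, M) = (rsort (strip ((a - c) :: (b - c) :: M)), L) := by
  have hp : ((3 : ℕ) - 2 : ℤ) * M.sum + 1 - List.sum [a, b, c] = -c := by
    simp only [List.sum_cons, List.sum_nil]; push_cast; linarith
  simp only [smlink, List.take, List.drop, List.length_cons, hp]
  rw [strip_eq_self hL, strip_rsort]
  simp [strip, List.filter_cons, sub_eq_add_neg]

lemma validLink_three_iff_s11 {a b c : ℤ} {L M : List ℤ} :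
    ValidLink 3 (a :: b :: c :: L, M) ↔ a + b ≤ M.sum + 1 := by
  simp [ValidLink]
  omega

lemma IsDecoration.of_smlink {c : ℕ} {P : List ℤ × List ℤ} (h₁ : IsPartition P.1)
    (h₂ : IsPartition P.2) (hP : ValidLink c P) (h : IsDecoration c (smlink c P)) :
    IsDecoration c P := by
  obtain ⟨-, -, n, hvalid, hn⟩ := h
  refine ⟨h₁, h₂, n + 1, fun m hm => ?_, by rwa [Function.iterate_succ_apply]⟩
  cases m with
  | zero => exact hP
  | succ m => exact Function.iterate_succ_apply _ m P ▸ hvalid m (by omega)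

lemma Hmu_succ (t : ℕ) : Hmu (t + 1) = 2 ^ t :: Hmu t := by
  simp [Hmu, List.range_succ_eq_map]
  intro i _
  omega

lemma Hlam_succ_succ (s : ℕ) : Hlam (s + 2) = 2 ^ (s + 1) :: 2 ^ (s + 1) :: Hlam (s + 1) := by
  simp only [Hlam, show 2 * (s + 2 - 1) = 2 * (s + 1 - 1) + 1 + 1 by omega, List.range_succ_eq_map,
    List.map_cons, List.map_map, List.cons_append]
  simp
  intro i _
  omega

lemma Hlam_succ_eq_cons_cons (s : ℕ) : Hlam (s + 1) = 2 ^ s :: 2 ^ s :: (Hlam (s + 1)).drop 2 := by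
  cases s with
  | zero => rfl
  | succ s => rw [Hlam_succ_succ]; rfl

lemma sum_Hmu (t : ℕ) : (Hmu t).sum = 2 ^ t - 1 := by
  induction t with
  | zero => rfl
  | succ t ih => rw [Hmu_succ, List.sum_cons, ih, pow_succ]; ring

lemma sum_Hlam (s : ℕ) : (Hlam (s + 1)).sum = 2 ^ (s + 2) - 1 := by
  induction s with
  | zero => rfl
  | succ s ih => rw [Hlam_succ_succ, List.sum_cons, List.sum_cons, ih, pow_succ _ (s + 2)]; ring

lemma two_pow_add_two_pow_eq (s : ℕ) : (2 : ℤ) ^ s + 2 ^ s = (Hmu (s + 1)).sum + 1 := by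
  rw [sum_Hmu, pow_succ]; ring

lemma isPartition_Hmu (t : ℕ) : IsPartition (Hmu t) :=
  ⟨pairwise_ge_map_range ((pow_right_mono₀ one_le_two).comp_antitone fun i j h => by omega) t,
    by simp [Hmu]⟩

lemma isPartition_Hlam (t : ℕ) : IsPartition (Hlam t) := by
  refine ⟨List.pairwise_append.2 ⟨pairwise_ge_map_range
    ((pow_right_mono₀ one_le_two).comp_antitone fun i j h => by omega) _, by decide, ?_⟩, ?_⟩
  · rintro _ hx b hb
    obtain ⟨i, -, rfl⟩ := List.mem_map.1 hx
    rw [show b = 1 by simpa using hb]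
    exact one_le_pow₀ one_le_two
  · simp only [Hlam, List.mem_append, List.mem_map, List.mem_cons, List.not_mem_nil, or_false]
    rintro x (⟨i, -, rfl⟩ | rfl | rfl | rfl) <;> positivity

def Hmid (s : ℕ) : List ℤ × List ℤ :=
  (2 ^ (s + 1) :: 2 ^ s :: 2 ^ s :: Hmu (s + 1), 2 ^ s :: (Hlam (s + 1)).drop 2)

lemma isPartition_Hmid (s : ℕ) : IsPartition (Hmid s).1 ∧ IsPartition (Hmid s).2 := by
  refine ⟨?_, (isPartition_cons_cons.1 (Hlam_succ_eq_cons_cons s ▸ isPartition_Hlam (s + 1))).2⟩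
  have h := isPartition_Hmu (s + 1)
  rw [Hmu_succ] at h
  simp only [Hmid, Hmu_succ, isPartition_cons_cons, h, le_refl, and_true]
  exact pow_le_pow_right₀ one_le_two s.le_succ

lemma two_pow_succ_add_two_pow_eq (s : ℕ) :
    (2 : ℤ) ^ (s + 1) + 2 ^ s = (2 ^ s :: (Hlam (s + 1)).drop 2).sum + 1 := by
  have h := sum_Hlam s
  rw [Hlam_succ_eq_cons_cons] at h
  simp only [List.sum_cons] at h ⊢
  rw [show (2 : ℤ) ^ (s + 2) = 2 ^ s * 4 by ring] at h
  rw [pow_succ]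
  linarith

lemma smlink_Hpair (s : ℕ) : smlink 3 (Hpair (s + 2)) = Hmid s := by
  have hpos : ∀ x ∈ (2 : ℤ) ^ s :: 2 ^ s :: Hmu (s + 2), 0 < x := by
    simpa using (isPartition_Hmu _).2
  rw [Hpair, Hlam_succ_succ, Hlam_succ_eq_cons_cons s,
    smlink_three_of_add_eq (L := 2 ^ s :: (Hlam (s + 1)).drop 2) (two_pow_add_two_pow_eq (s + 1))
      (isPartition_Hmid s).2.2,
    show (2 : ℤ) ^ (s + 1) - 2 ^ s = 2 ^ s by ring, strip_eq_self hpos, Hmu_succ]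
  exact Prod.ext (rsort_eq_of_perm (List.perm_middle (l₁ := [_, _])) (isPartition_Hmid s).1.1) rfl

lemma smlink_Hmid (s : ℕ) : smlink 3 (Hmid s) = Hpair (s + 1) := by
  rw [Hmid, smlink_three_of_add_eq (two_pow_succ_add_two_pow_eq s) (isPartition_Hmu _).2, sub_self,
    show (2 : ℤ) ^ (s + 1) - 2 ^ s = 2 ^ s by ring]
  rw [strip_cons_of_pos _ (pow_pos two_pos s), strip_cons_zero,
    strip_eq_self (l := 2 ^ s :: (Hlam (s + 1)).drop 2) (isPartition_Hmid s).2.2,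
    ← Hlam_succ_eq_cons_cons,
    rsort_eq_self (isPartition_Hlam _).1, Hpair]

lemma validLink_Hpair (s : ℕ) : ValidLink 3 (Hpair (s + 2)) := by
  rw [Hpair, Hlam_succ_succ, Hlam_succ_eq_cons_cons s, validLink_three_iff_s11]
  exact (two_pow_add_two_pow_eq (s + 1)).le

lemma validLink_Hmid (s : ℕ) : ValidLink 3 (Hmid s) :=
  validLink_three_iff_s11.2 (two_pow_succ_add_two_pow_eq s).le

lemma isDecoration_Hpair (s : ℕ) : IsDecoration 3 (Hpair (s + 1)) := by
  induction s with
  | zero => exact ⟨isPartition_Hlam 1, isPartition_Hmu 1, 0, nofun, rfl⟩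
  | succ s ih =>
    refine .of_smlink (isPartition_Hlam _) (isPartition_Hmu _) (validLink_Hpair s) ?_
    rw [smlink_Hpair]
    exact .of_smlink (isPartition_Hmid s).1 (isPartition_Hmid s).2 (validLink_Hmid s)
      (smlink_Hmid s ▸ ih)

lemma genlink_Hpair (s : ℕ) :
    genlink (Hpair (s + 1)) = (2 ^ (s + 1) :: 2 ^ (s + 1) :: Hmu (s + 2), Hlam (s + 1)) := by
  have h : IsPartition (2 ^ (s + 1) :: 2 ^ (s + 1) :: Hmu (s + 2)) := by
    have hHmu := isPartition_Hmu (s + 2)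
    rw [Hmu_succ] at hHmu ⊢
    simp [isPartition_cons_cons, hHmu]
  rw [genlink, Hpair, sum_Hmu, sub_add_cancel, ← Hmu_succ, rsort_eq_self h.1]

lemma p0_genlink_Hpair (s : ℕ) : p0 (genlink (Hpair (s + 1))) = Hpair (s + 2) := by
  rw [genlink_Hpair, p0, Hpair, Hlam_succ_succ]
  simp [rsort_eq_self (Hlam_succ_succ s ▸ isPartition_Hlam (s + 2)).1]

/-- For `t ≥ 1`: the level of `H_t` is `κ(H_t) = 2^t - 1`; moreover
`H_{t+1} = p₀(gen(H_t))`; consequently every `H_t` is a codimension-3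
decoration with `λ₁ + λ₂ = κ(H_t) + 1`. -/
theorem stmt11 (t : ℕ) (ht : 1 ≤ t) :
    (Hmu t).sum = 2 ^ t - 1 ∧
    Hpair (t + 1) = p0 (genlink (Hpair t)) ∧
    IsDecoration 3 (Hpair t) ∧
    (Hlam t).getD 0 0 + (Hlam t).getD 1 0 = (Hmu t).sum + 1 := by
  obtain ⟨s, rfl⟩ : ∃ s, t = s + 1 := ⟨t - 1, by omega⟩
  refine ⟨sum_Hmu _, (p0_genlink_Hpair s).symm, isDecoration_Hpair s, ?_⟩
  rw [Hlam_succ_eq_cons_cons]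
  exact two_pow_add_two_pow_eq s
end
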